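/- The function π^R(a) defined as the square root of ∑_{j=0}^{n-1}(Q(j|a,m,n)/(a+j)² − m/(ma+j)²), where Q is the Beta-Binomial upper tail as above, is O(a^{-3/2}) as a → ∞ and hence integrable at infinity; combined with integrability at 0, π^R is a proper (integrable) prior on (0,∞). -/

import Mathlib

open Asymptotics Filter MeasureTheory

/-- The Beta-Binomial pmf `p(x | a, m, n)`. -/
noncomputable def bbinom (m n : ℕ) (a : ℝ) (x : ℕ) : ℝ :=
  (n.choose x : ℝ) * Real.Gamma ((x : ℝ) + a) *
    Real.Gamma ((n : ℝ) - (x : ℝ) + ((m : ℝ) - 1) * a) * Real.Gamma ((m : ℝ) * a) /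
    (Real.Gamma a * Real.Gamma (((m : ℝ) - 1) * a) * Real.Gamma ((n : ℝ) + (m : ℝ) * a))

/-- The upper tail `Q(j | a, m, n) = ∑_{l=j+1}^n p(l | a, m, n)`. -/
noncomputable def Qtail (m n : ℕ) (a : ℝ) (j : ℕ) : ℝ :=
  ∑ l ∈ Finset.Icc (j + 1) n, bbinom m n a l

/-- The reference prior `π^R(a | m, n)`. -/
noncomputable def piR (m n : ℕ) (a : ℝ) : ℝ :=
  Real.sqrt (∑ j ∈ Finset.range n,
    (Qtail m n a j / (a + (j : ℝ)) ^ 2 - (m : ℝ) / ((m : ℝ) * a + (j : ℝ)) ^ 2))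

/-! For `l ≤ n` the Gamma ratios in `p(l | a)` are rising products, so `p(l | a)` is a rational
function of `a`, and so is the radicand `S(a)` of `π^R(a) = √S(a)`.

At infinity, in the variable `t = 1/a` each `p(l | a)` is regular at `t = 0`, with value the
Binomial(n, 1/m) pmf `Bi(l)`. Hence `S(a) = a⁻² h(1/a)` with `h` differentiable at `0` and
`h(0) = ∑_j ∑_{l > j} Bi(l) - n/m = ∑_l l Bi(l) - n/m = 0`, so `S(a) = O(a⁻³)`.

At zero, every `p(l | a)` with `l ≥ 1` carries a factor `a` in numerator and denominator; after
cancelling it, `Q(0 | a) → 1/m`, which kills the `a⁻²` singularity of the `j = 0` term, so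
`S(a) = O(a⁻¹)`. Thus `π^R` is `O(a^{-1/2})` at `0⁺` and `O(a^{-3/2})` at `∞`, and being
continuous on `(0, ∞)` it is integrable there. -/

open Finset Topology

theorem Real.Gamma_add_nat_eq_prod {x : ℝ} (hx : ∀ i : ℕ, x + i ≠ 0) (k : ℕ) :
    Real.Gamma (x + k) = (∏ i ∈ range k, (x + i)) * Real.Gamma x := by
  induction k with
  | zero => simp
  | succ k ih =>
    rw [Nat.cast_succ, ← add_assoc, Real.Gamma_add_one (hx k), ih, prod_range_succ]
    ring

theorem prod_range_mul_add_eq_pow_mul_prod {K : Type*} [Field K] {a : K} (ha : a ≠ 0) (c : K)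
    (k : ℕ) : ∏ i ∈ range k, (c * a + i) = a ^ k * ∏ i ∈ range k, (c + i * a⁻¹) := by
  have h := pow_card_mul_prod (s := range k) (b := a) (f := fun i : ℕ => c + i * a⁻¹)
  rw [card_range] at h
  rw [h]
  refine prod_congr rfl fun i _ => ?_
  field_simp

theorem prod_range_add_eq_mul_prod {R : Type*} [CommSemiring R] {k : ℕ} (hk : 1 ≤ k) (x : R) :
    ∏ i ∈ range k, (x + i) = x * ∏ i ∈ range (k - 1), (x + (i + 1)) := by
  obtain ⟨k, rfl⟩ := Nat.exists_eq_add_of_le' hk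
  simp only [prod_range_succ', Nat.cast_add, Nat.cast_one, Nat.cast_zero, add_zero,
    add_tsub_cancel_right]
  ring

theorem sum_range_mul_choose_mul_pow {R : Type*} [CommSemiring R] (x y : R) (n : ℕ) :
    ∑ l ∈ range (n + 1), l * (n.choose l * x ^ l * y ^ (n - l)) = n * x * (x + y) ^ (n - 1) := by
  cases n with
  | zero => simp
  | succ n =>
    rw [sum_range_succ', Nat.add_sub_cancel, add_pow, mul_sum]
    simp only [Nat.cast_zero, zero_mul, add_zero]
    refine sum_congr rfl fun l _ => ?_
    have hc : ((l + 1 : ℕ) : R) * ((n + 1).choose (l + 1) : ℕ) =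
        (n + 1 : ℕ) * (n.choose l : ℕ) := by
      rw [← Nat.cast_mul, ← Nat.cast_mul, mul_comm, ← Nat.add_one_mul_choose_eq]
    rw [Nat.add_sub_add_right, pow_succ]
    calc _ = ((l + 1 : ℕ) : R) * ((n + 1).choose (l + 1) : ℕ) * (x ^ l * y ^ (n - l) * x) := by
          ring
      _ = _ := by rw [hc]; ring

theorem sum_range_sum_Icc_eq_sum_nsmul {M : Type*} [AddCommMonoid M] (g : ℕ → M) (n : ℕ) :
    ∑ j ∈ range n, ∑ l ∈ Icc (j + 1) n, g l = ∑ l ∈ range (n + 1), l • g l := by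
  rw [sum_comm' (t' := range (n + 1)) (s' := range)]
  · simp
  · intro j l
    simp only [mem_range, mem_Icc]
    omega

theorem bbinom_eq_prod {m n l : ℕ} {a : ℝ} (hm : 1 < m) (hl : l ≤ n) (ha : 0 < a) :
    bbinom m n a l = n.choose l * (∏ i ∈ range l, (a + i)) *
      (∏ i ∈ range (n - l), ((m - 1) * a + i)) / ∏ i ∈ range n, (m * a + i) := by
  have hm1 : (0 : ℝ) < m - 1 := by rw [sub_pos]; exact_mod_cast hm
  have hb : 0 < ((m : ℝ) - 1) * a := by positivity
  have hc : 0 < (m : ℝ) * a := by positivity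
  have hne {x : ℝ} (hx : 0 < x) (i : ℕ) : x + i ≠ 0 := by positivity
  have e : (n : ℝ) - l + (m - 1) * a = (m - 1) * a + ((n - l : ℕ) : ℝ) := by
    push_cast [Nat.cast_sub hl]; ring
  rw [bbinom, add_comm (l : ℝ), e, add_comm (n : ℝ), Real.Gamma_add_nat_eq_prod (hne ha),
    Real.Gamma_add_nat_eq_prod (hne hb), Real.Gamma_add_nat_eq_prod (hne hc)]
  have := Real.Gamma_pos_of_pos ha
  have := Real.Gamma_pos_of_pos hb
  have := Real.Gamma_pos_of_pos hc
  field_simp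

/-- `bbinom m n a l` in the variable `t = a⁻¹`; at `t = 0` it is the Binomial(n, 1/m) pmf. -/
noncomputable def bbinomAtTop (m n l : ℕ) (t : ℝ) : ℝ :=
  n.choose l * (∏ i ∈ range l, (1 + i * t)) * (∏ i ∈ range (n - l), (m - 1 + i * t)) /
    ∏ i ∈ range n, (m + i * t)

theorem bbinom_eq_bbinomAtTop {m n l : ℕ} {a : ℝ} (hm : 1 < m) (hl : l ≤ n) (ha : 0 < a) :
    bbinom m n a l = bbinomAtTop m n l a⁻¹ := by
  have h1 := prod_range_mul_add_eq_pow_mul_prod ha.ne' 1 l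
  have h2 := prod_range_mul_add_eq_pow_mul_prod ha.ne' (m - 1) (n - l)
  have h3 := prod_range_mul_add_eq_pow_mul_prod ha.ne' m n
  rw [one_mul] at h1
  have : (0 : ℝ) < m := by positivity
  rw [bbinom_eq_prod hm hl ha, bbinomAtTop, h1, h2, h3, ← Nat.add_sub_cancel' hl, pow_add,
    Nat.add_sub_cancel_left]
  field_simp

theorem bbinomAtTop_zero (m n l : ℕ) :
    bbinomAtTop m n l 0 = n.choose l * (m - 1) ^ (n - l) / m ^ n := by
  simp [bbinomAtTop]

/-- The binomial mean `∑ l Bi(l) = n/m`, written as a sum of upper tails. -/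
theorem sum_range_sum_Icc_bbinomAtTop_zero {m : ℕ} (hm : m ≠ 0) (n : ℕ) :
    ∑ j ∈ range n, ∑ l ∈ Icc (j + 1) n, bbinomAtTop m n l 0 = n / m := by
  have key := sum_range_mul_choose_mul_pow (1 : ℝ) (m - 1) n
  simp only [one_pow, mul_one, add_sub_cancel] at key
  simp only [sum_range_sum_Icc_eq_sum_nsmul, bbinomAtTop_zero, nsmul_eq_mul, ← sum_div, key]
  rcases Nat.eq_zero_or_pos n with rfl | hn
  · simp
  · rw [← Nat.sub_add_cancel hn, pow_succ, Nat.add_sub_cancel, Nat.cast_add_one]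
    field_simp

noncomputable def piRSq (m n : ℕ) (a : ℝ) : ℝ :=
  ∑ j ∈ range n, (Qtail m n a j / (a + j) ^ 2 - m / (m * a + j) ^ 2)

noncomputable def piRSqAtTop (m n : ℕ) (t : ℝ) : ℝ :=
  ∑ j ∈ range n, ((∑ l ∈ Icc (j + 1) n, bbinomAtTop m n l t) / (1 + j * t) ^ 2 -
    m / (m + j * t) ^ 2)

theorem piRSq_eq_piRSqAtTop {m n : ℕ} {a : ℝ} (hm : 1 < m) (ha : 0 < a) :
    piRSq m n a = a⁻¹ ^ 2 * piRSqAtTop m n a⁻¹ := by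
  rw [piRSq, piRSqAtTop, mul_sum]
  refine sum_congr rfl fun j _ => ?_
  rw [Qtail, sum_congr rfl fun l hl => bbinom_eq_bbinomAtTop hm (mem_Icc.1 hl).2 ha]
  have : (0 : ℝ) < m := by positivity
  field_simp

theorem piRSqAtTop_zero {m : ℕ} (hm : m ≠ 0) (n : ℕ) : piRSqAtTop m n 0 = 0 := by
  simp only [piRSqAtTop, mul_zero, add_zero, one_pow, div_one, sum_sub_distrib,
    sum_range_sum_Icc_bbinomAtTop_zero hm, sum_const, card_range, nsmul_eq_mul]
  field_simp
  ring

theorem differentiableAt_piRSqAtTop {m : ℕ} (hm : 0 < m) (n : ℕ) {t : ℝ} (ht : 0 ≤ t) :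
    DifferentiableAt ℝ (piRSqAtTop m n) t := by
  unfold piRSqAtTop bbinomAtTop
  fun_prop (disch := positivity)

/-- For `1 ≤ l`, `bbinom m n a l` with the common factor `a` of numerator and denominator
cancelled; unlike `bbinom`, it is regular at `a = 0`. -/
noncomputable def bbinomAtZero (m n l : ℕ) (a : ℝ) : ℝ :=
  n.choose l * (∏ i ∈ range (l - 1), (a + (i + 1))) * (∏ i ∈ range (n - l), ((m - 1) * a + i)) /
    (m * ∏ i ∈ range (n - 1), (m * a + (i + 1)))

theorem bbinom_eq_bbinomAtZero {m n l : ℕ} {a : ℝ} (hm : 1 < m) (hl : 1 ≤ l) (hln : l ≤ n)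
    (ha : 0 < a) : bbinom m n a l = bbinomAtZero m n l a := by
  have : (0 : ℝ) < m := by positivity
  rw [bbinom_eq_prod hm hln ha, bbinomAtZero, prod_range_add_eq_mul_prod hl,
    prod_range_add_eq_mul_prod (hl.trans hln)]
  field_simp

theorem bbinomAtZero_zero_of_lt {m n l : ℕ} (hl : l < n) : bbinomAtZero m n l 0 = 0 := by
  rw [bbinomAtZero, prod_eq_zero (i := 0) (mem_range.2 (Nat.sub_pos_of_lt hl)) (by simp)]
  simp

theorem bbinomAtZero_self_zero (m n : ℕ) : bbinomAtZero m n n 0 = 1 / m := by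
  have : ∏ i ∈ range (n - 1), ((i : ℝ) + 1) ≠ 0 := by positivity
  simp only [bbinomAtZero, Nat.choose_self, Nat.cast_one, zero_add, one_mul, tsub_self,
    range_zero, mul_zero, prod_empty, mul_one, one_div]
  field_simp

noncomputable def piRSqAtZero (m n : ℕ) (a : ℝ) : ℝ :=
  (∑ l ∈ Icc 1 n, bbinomAtZero m n l a) - 1 / m +
    a ^ 2 * ∑ j ∈ Ico 1 n, ((∑ l ∈ Icc (j + 1) n, bbinomAtZero m n l a) / (a + j) ^ 2 -
      m / (m * a + j) ^ 2)

theorem piRSq_eq_piRSqAtZero {m n : ℕ} {a : ℝ} (hm : 1 < m) (hn : 1 ≤ n) (ha : 0 < a) :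
    piRSq m n a = piRSqAtZero m n a / a ^ 2 := by
  have hQ (j : ℕ) : Qtail m n a j = ∑ l ∈ Icc (j + 1) n, bbinomAtZero m n l a :=
    sum_congr rfl fun l hl =>
      bbinom_eq_bbinomAtZero hm ((Nat.le_add_left 1 j).trans (mem_Icc.1 hl).1) (mem_Icc.1 hl).2 ha
  have : (0 : ℝ) < m := by positivity
  rw [piRSq, range_eq_Ico, sum_eq_sum_Ico_succ_bot hn, piRSqAtZero]
  simp only [hQ, Nat.cast_zero, add_zero, zero_add]
  field_simp

theorem piRSqAtZero_zero (m : ℕ) {n : ℕ} (hn : 1 ≤ n) : piRSqAtZero m n 0 = 0 := by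
  rw [piRSqAtZero, sum_eq_single_of_mem n (by simp [hn])
    fun l hl hln => bbinomAtZero_zero_of_lt (lt_of_le_of_ne (mem_Icc.1 hl).2 hln),
    bbinomAtZero_self_zero]
  simp

theorem differentiableAt_piRSqAtZero {m : ℕ} (hm : 0 < m) (n : ℕ) :
    DifferentiableAt ℝ (piRSqAtZero m n) 0 := by
  unfold piRSqAtZero bbinomAtZero
  refine DifferentiableAt.add (by fun_prop (disch := positivity)) <| .mul (by fun_prop) <|
    .fun_sum fun j hj => ?_
  have : (0 : ℝ) < j := by simp only [mem_Ico] at hj; exact_mod_cast hj.1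
  fun_prop (disch := positivity)

theorem Asymptotics.IsBigO.sqrt_rpow {l : Filter ℝ} {f : ℝ → ℝ} {s : ℝ} (hf : f =O[l] (· ^ s))
    (hl : ∀ᶠ x in l, 0 < x) : (fun x => √(f x)) =O[l] (· ^ (s / 2)) := by
  refine (hf.sqrt (hl.mono fun x hx => by positivity)).congr' .rfl ?_
  filter_upwards [hl] with x hx
  rw [Real.sqrt_eq_rpow, ← Real.rpow_mul hx.le, mul_one_div]

theorem piRSq_isBigO_atTop {m : ℕ} (hm : 1 < m) (n : ℕ) :
    piRSq m n =O[atTop] (· ^ (-3 : ℝ)) := by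
  have h := (differentiableAt_piRSqAtTop (by omega : 0 < m) n le_rfl).isBigO_sub
  simp only [piRSqAtTop_zero (by omega : m ≠ 0), sub_zero] at h
  refine ((isBigO_refl (fun a : ℝ => a⁻¹ ^ 2) atTop).mul
    (h.comp_tendsto tendsto_inv_atTop_zero)).congr' ?_ ?_
  · filter_upwards [eventually_gt_atTop 0] with a ha
    exact (piRSq_eq_piRSqAtTop hm ha).symm
  · filter_upwards [eventually_gt_atTop 0] with a ha
    rw [Function.comp_apply, Real.rpow_neg ha.le, ← pow_succ, inv_pow]
    norm_cast

theorem piRSq_isBigO_nhdsGT {m n : ℕ} (hm : 1 < m) (hn : 1 ≤ n) :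
    piRSq m n =O[𝓝[>] 0] (· ^ (-1 : ℝ)) := by
  have h := (differentiableAt_piRSqAtZero (by omega : 0 < m) n).isBigO_sub
  simp only [piRSqAtZero_zero m hn, sub_zero] at h
  refine ((h.mono nhdsWithin_le_nhds).mul (isBigO_refl (fun a : ℝ => (a ^ 2)⁻¹) _)).congr' ?_ ?_
  · filter_upwards [self_mem_nhdsWithin] with a ha
    rw [piRSq_eq_piRSqAtZero hm hn ha, div_eq_mul_inv]
  · filter_upwards [self_mem_nhdsWithin] with a (ha : 0 < a)
    rw [Real.rpow_neg_one]
    field_simp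

theorem continuousOn_piR {m : ℕ} (hm : 1 < m) (n : ℕ) : ContinuousOn (piR m n) (Set.Ioi 0) := by
  have h : ContinuousOn (fun a : ℝ => a⁻¹ ^ 2 * piRSqAtTop m n a⁻¹) (Set.Ioi 0) := fun a ha =>
    ((continuousAt_inv₀ (ne_of_gt ha)).pow 2 |>.mul
      ((differentiableAt_piRSqAtTop (by omega) n (inv_nonneg.2 (le_of_lt ha))).continuousAt.comp
        (continuousAt_inv₀ (ne_of_gt ha)))).continuousWithinAt
  exact h.sqrt.congr fun a ha => congrArg Real.sqrt (piRSq_eq_piRSqAtTop hm ha)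

theorem integrableOn_Ioi_zero_of_isBigO {f : ℝ → ℝ} {r s : ℝ} (hf : ContinuousOn f (Set.Ioi 0))
    (h0 : f =O[𝓝[>] 0] (· ^ s)) (hs : -1 < s) (htop : f =O[atTop] (· ^ r)) (hr : r < -1) :
    IntegrableOn f (Set.Ioi 0) := by
  have hmeas := hf.aestronglyMeasurable (μ := volume) measurableSet_Ioi
  refine integrableOn_Ioi_iff_integrableAtFilter_atTop_nhdsWithin.2
    ⟨?_, ?_, hf.locallyIntegrableOn measurableSet_Ioi⟩
  · exact htop.integrableAtFilter
      (AEStronglyMeasurable.stronglyMeasurableAtFilter_of_mem hmeas (Ioi_mem_atTop 0))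
      (integrableAtFilter_rpow_atTop_iff.2 hr)
  · exact h0.integrableAtFilter
      (AEStronglyMeasurable.stronglyMeasurableAtFilter_of_mem hmeas self_mem_nhdsWithin)
      ⟨Set.Ioo 0 1, Ioo_mem_nhdsGT one_pos,
        (intervalIntegral.integrableOn_Ioo_rpow_iff one_pos).2 hs⟩

/-- `π^R(a) = O(a^{-3/2})` as `a → ∞`, and `π^R` is a proper (integrable) prior
on `(0,∞)`. -/
theorem stmt12 (m n : ℕ) (hm : 2 ≤ m) (hn : 2 ≤ n) :
    ((piR m n) =O[atTop] fun a : ℝ => a ^ (-(3 / 2) : ℝ))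
    ∧ IntegrableOn (piR m n) (Set.Ioi 0) := by
  have htop : piR m n =O[atTop] fun a : ℝ => a ^ (-(3 / 2) : ℝ) := by
    show (fun a => √(piRSq m n a)) =O[atTop] _
    convert (piRSq_isBigO_atTop hm n).sqrt_rpow (eventually_gt_atTop 0) using 3
    norm_num
  have hzero : piR m n =O[𝓝[>] 0] fun a : ℝ => a ^ (-(1 / 2) : ℝ) := by
    show (fun a => √(piRSq m n a)) =O[𝓝[>] 0] _
    convert (piRSq_isBigO_nhdsGT (n := n) hm (by omega)).sqrt_rpow self_mem_nhdsWithin using 3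
    norm_num
  exact ⟨htop, integrableOn_Ioi_zero_of_isBigO (continuousOn_piR hm n) hzero (by norm_num) htop
    (by norm_num)⟩
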